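/- Let n ≥ 3 and let A = {a ∈ E^n : |a| is even}. Then the n-th Dedekind number is a sum of powers of 2: D_n = Σ_{f ∈ M(A)} 2^|E^n \ S_{A,f}|, where the sum ranges over all monotone functions f : A → Bool. -/
import Mathlib


/-- The `n`-dimensional cube `E^n = {0,1}^n`, realized as functions `Fin n → Bool`
with the pointwise order (`false < true`). -/
abbrev Cube (n : ℕ) := Fin n → Bool

/-- The weight of a point: the number of coordinates equal to `true`. -/
def weight {n : ℕ} (a : Cube n) : ℕ :=
  (Finset.univ.filter fun i => a i = true).card

/-- `covers a b` means `b` covers `a`: `a ≤ b` and `|b| = |a| + 1`. -/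
def covers {n : ℕ} (a b : Cube n) : Prop :=
  a ≤ b ∧ weight b = weight a + 1

/-- The upper set `S_{a,1} = {b : a ≤ b}`. -/
def upSet {n : ℕ} (a : Cube n) : Set (Cube n) := {b | a ≤ b}

/-- The lower set `S_{a,0} = {b : b ≤ a}`. -/
def downSet {n : ℕ} (a : Cube n) : Set (Cube n) := {b | b ≤ a}

/-- The subset `S_{A,f} = ⋃_{a ∈ A} S_{a, f(a)}` generated by `A` and `f : A → Bool`. -/
def genSet {n : ℕ} (A : Set (Cube n)) (f : A → Bool) : Set (Cube n) :=
  ⋃ a : A, if f a = true then upSet a.1 else downSet a.1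

/-- The local Dedekind number `D(S)`: the number of monotone functions `S → Bool`,
where `S` carries the order induced from `E^n`. -/
noncomputable def localDedekind {n : ℕ} (S : Set (Cube n)) : ℕ :=
  Nat.card {f : S → Bool // Monotone f}

/-- The `n`-th Dedekind number `D_n = D(E^n)`. -/
noncomputable def dedekind (n : ℕ) : ℕ := localDedekind (Set.univ : Set (Cube n))

/-- A set `T` is a `V₃`: a three-element subset `{v, a, b}` with `a ≠ b` such that
either `v ⋖ a` and `v ⋖ b`, or `a ⋖ v` and `b ⋖ v`. -/
def isV3 {n : ℕ} (T : Set (Cube n)) : Prop :=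
  ∃ v a b : Cube n, a ≠ b ∧ T = {v, a, b} ∧
    ((covers v a ∧ covers v b) ∨ (covers a v ∧ covers b v))

/-- `A` completely partitions `S`: for every monotone `f : A → Bool`, the number
`D(S \ S_{A,f})` is a product of Dedekind numbers. -/
def completelyPartitions {n : ℕ} (A S : Set (Cube n)) : Prop :=
  ∀ f : A → Bool, Monotone f →
    ∃ l : List ℕ, localDedekind (S \ genSet A f) = (l.map dedekind).prod

set_option maxHeartbeats 1000000

lemma mem_genSet_iff {n : ℕ} {A : Set (Cube n)} {f : A → Bool} {b : Cube n} :
    b ∈ genSet A f ↔ ∃ a : A, (f a = true ∧ a.1 ≤ b) ∨ (f a = false ∧ b ≤ a.1) := by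
  simp only [genSet, Set.mem_iUnion]
  constructor
  · rintro ⟨a, ha⟩
    by_cases h : f a = true
    · exact ⟨a, Or.inl ⟨h, by simpa [h, upSet] using ha⟩⟩
    · exact ⟨a, Or.inr ⟨by simpa using h, by simpa [h, downSet] using ha⟩⟩
  · rintro ⟨a, h | h⟩
    · exact ⟨a, by simp [h.1, upSet, h.2]⟩
    · exact ⟨a, by simp [h.1, downSet, h.2]⟩

lemma weight_update {n : ℕ} {b : Cube n} {i : Fin n} (hbi : b i = false) :
    weight (Function.update b i true) = weight b + 1 := by
  unfold weight
  have hset : (Finset.univ.filter fun j => Function.update b i true j = true)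
      = insert i (Finset.univ.filter fun j => b j = true) := by
    ext j
    by_cases hj : j = i
    · subst hj; simp [hbi]
    · simp [Function.update_apply, hj]
  rw [hset, Finset.card_insert_of_notMem (by simp [hbi])]

lemma exists_mid {n : ℕ} {b c : Cube n} (hbc : b ≤ c) (hne : b ≠ c) :
    ∃ a : Cube n, b ≤ a ∧ a ≤ c ∧ weight a = weight b + 1 := by
  have : ∃ i, b i ≠ c i := by
    by_contra h
    push_neg at h
    exact hne (funext h)
  obtain ⟨i, hi⟩ := this
  have hbi : b i = false := by
    cases hb' : b i
    · rfl
    · cases hc' : c i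
      · exact absurd (hbc i) (by simp [hb', hc'])
      · exact absurd (hb'.trans hc'.symm) hi
  have hci : c i = true := by
    cases hc' : c i
    · exact absurd (hbi.trans hc'.symm) hi
    · rfl
  refine ⟨Function.update b i true, ?_, ?_, weight_update hbi⟩
  · intro j
    by_cases hj : j = i
    · subst hj; simp
    · simp [Function.update_apply, hj]
  · intro j
    by_cases hj : j = i
    · subst hj; simp [hci]
    · simpa [Function.update_apply, hj] using hbc j

section Even
variable {n : ℕ}

/-- The set of even-weight points. -/
abbrev Aev (n : ℕ) : Set (Cube n) := {a : Cube n | Even (weight a)}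

lemma not_even_of_not_genSet {f : Aev n → Bool} {b : Cube n}
    (hb : b ∉ genSet (Aev n) f) : ¬ Even (weight b) := by
  intro h
  apply hb
  rw [mem_genSet_iff]
  refine ⟨⟨b, h⟩, ?_⟩
  cases hfb : f ⟨b, h⟩
  · exact Or.inr ⟨rfl, le_refl _⟩
  · exact Or.inl ⟨rfl, le_refl _⟩

lemma step_up {f : Aev n → Bool} {b c : Cube n}
    (hb : b ∉ genSet (Aev n) f) (hbc : b ≤ c) (hne : b ≠ c) :
    ∃ a : Aev n, a.1 ≤ c ∧ f a = true := by
  obtain ⟨a, hba, hac, hw⟩ := exists_mid hbc hne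
  have hA : a ∈ Aev n := by
    show Even (weight a)
    rw [hw]
    exact Nat.even_add_one.mpr (not_even_of_not_genSet hb)
  refine ⟨⟨a, hA⟩, hac, ?_⟩
  cases hfa : f ⟨a, hA⟩
  · exact absurd (mem_genSet_iff.mpr ⟨⟨a, hA⟩, Or.inr ⟨hfa, hba⟩⟩) hb
  · rfl

open Classical in
/-- Extension of `f : A → Bool` by arbitrary values `h` on the complement of `genSet A f`. -/
noncomputable def extFun (f : Aev n → Bool)
    (h : ((Set.univ : Set (Cube n)) \ genSet (Aev n) f : Set (Cube n)) → Bool) :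
    Cube n → Bool := fun b =>
  if ∃ a : Aev n, a.1 ≤ b ∧ f a = true then true
  else if hb : b ∈ (Set.univ : Set (Cube n)) \ genSet (Aev n) f then h ⟨b, hb⟩ else false

lemma extFun_true {f : Aev n → Bool}
    {h : ((Set.univ : Set (Cube n)) \ genSet (Aev n) f : Set (Cube n)) → Bool}
    {b : Cube n} (hP : ∃ a : Aev n, a.1 ≤ b ∧ f a = true) : extFun f h b = true := by
  simp only [extFun]; rw [if_pos hP]

lemma extFun_false {f : Aev n → Bool}
    {h : ((Set.univ : Set (Cube n)) \ genSet (Aev n) f : Set (Cube n)) → Bool}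
    {b : Cube n} (hP : ¬ ∃ a : Aev n, a.1 ≤ b ∧ f a = true)
    (hb : b ∉ (Set.univ : Set (Cube n)) \ genSet (Aev n) f) : extFun f h b = false := by
  simp only [extFun]; rw [if_neg hP, dif_neg hb]

lemma extFun_mono (f : Aev n → Bool)
    (h : ((Set.univ : Set (Cube n)) \ genSet (Aev n) f : Set (Cube n)) → Bool) :
    Monotone (extFun f h) := by
  intro b c hbc
  by_cases hPb : ∃ a : Aev n, a.1 ≤ b ∧ f a = true
  · obtain ⟨a, hab, hfa⟩ := hPb
    have hPc : ∃ a : Aev n, a.1 ≤ c ∧ f a = true := ⟨a, hab.trans hbc, hfa⟩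
    rw [extFun_true hPc]; exact Bool.le_true _
  · by_cases hb : b ∈ (Set.univ : Set (Cube n)) \ genSet (Aev n) f
    · by_cases hne : b = c
      · subst hne; exact le_refl _
      · have hPc : ∃ a : Aev n, a.1 ≤ c ∧ f a = true := step_up hb.2 hbc hne
        rw [extFun_true hPc]; exact Bool.le_true _
    · rw [extFun_false hPb hb]; exact Bool.false_le _

lemma extFun_extends {f : Aev n → Bool} (hf : Monotone f)
    (h : ((Set.univ : Set (Cube n)) \ genSet (Aev n) f : Set (Cube n)) → Bool)
    (a : Aev n) : extFun f h a.1 = f a := by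
  cases hfa : f a
  · have hP : ¬ ∃ a' : Aev n, a'.1 ≤ a.1 ∧ f a' = true := by
      rintro ⟨a', ha', hfa'⟩
      have : f a' ≤ f a := hf (Subtype.coe_le_coe.mp ha')
      rw [hfa', hfa] at this
      exact absurd this (by simp)
    have hg : a.1 ∈ genSet (Aev n) f := mem_genSet_iff.mpr ⟨a, Or.inr ⟨hfa, le_refl _⟩⟩
    rw [extFun, if_neg hP, dif_neg (fun hc => hc.2 hg)]
  · have hP : ∃ a' : Aev n, a'.1 ≤ a.1 ∧ f a' = true := ⟨a, le_refl _, hfa⟩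
    rw [extFun, if_pos hP]

lemma extFun_compl (f : Aev n → Bool)
    (h : ((Set.univ : Set (Cube n)) \ genSet (Aev n) f : Set (Cube n)) → Bool)
    {b : Cube n} (hb : b ∈ (Set.univ : Set (Cube n)) \ genSet (Aev n) f) :
    extFun f h b = h ⟨b, hb⟩ := by
  have hP : ¬ ∃ a : Aev n, a.1 ≤ b ∧ f a = true := by
    rintro ⟨a, hab, hfa⟩
    exact hb.2 (mem_genSet_iff.mpr ⟨a, Or.inl ⟨hfa, hab⟩⟩)
  simp only [extFun]
  rw [if_neg hP, dif_pos hb]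

lemma eq_of_agree {g₁ g₂ : Cube n → Bool} (h₁ : Monotone g₁) (h₂ : Monotone g₂)
    (f : Aev n → Bool)
    (e₁ : ∀ a : Aev n, g₁ a.1 = f a) (e₂ : ∀ a : Aev n, g₂ a.1 = f a)
    (eC : ∀ b : Cube n, b ∉ genSet (Aev n) f → g₁ b = g₂ b) : g₁ = g₂ := by
  funext b
  by_cases hb : b ∈ genSet (Aev n) f
  · obtain ⟨a, hcase⟩ := mem_genSet_iff.mp hb
    rcases hcase with ⟨hfa, hab⟩ | ⟨hfa, hba⟩
    · have t₁ : g₁ b = true := by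
        have := h₁ hab; rw [e₁ a, hfa] at this
        exact le_antisymm (Bool.le_true _) this
      have t₂ : g₂ b = true := by
        have := h₂ hab; rw [e₂ a, hfa] at this
        exact le_antisymm (Bool.le_true _) this
      rw [t₁, t₂]
    · have t₁ : g₁ b = false := by
        have := h₁ hba; rw [e₁ a, hfa] at this
        exact le_antisymm this (Bool.false_le _)
      have t₂ : g₂ b = false := by
        have := h₂ hba; rw [e₂ a, hfa] at this
        exact le_antisymm this (Bool.false_le _)
      rw [t₁, t₂]
  · exact eC b hb

/-- Restriction of a monotone function on the cube to the even-weight points. -/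
def restrictM : {g : Cube n → Bool // Monotone g} → {f : Aev n → Bool // Monotone f} :=
  fun g => ⟨fun a => g.1 a.1, fun a b hab => g.2 (Subtype.coe_le_coe.mpr hab)⟩

noncomputable def fiberEquiv (f : {f : Aev n → Bool // Monotone f}) :
    {g : {g : Cube n → Bool // Monotone g} // restrictM g = f} ≃
      (((Set.univ : Set (Cube n)) \ genSet (Aev n) f.1 : Set (Cube n)) → Bool) := by
  refine Equiv.ofBijective (fun g b => g.1.1 b.1) ⟨?_, ?_⟩
  · rintro ⟨⟨g₁, m₁⟩, r₁⟩ ⟨⟨g₂, m₂⟩, r₂⟩ hφ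
    have e₁ : ∀ a : Aev n, g₁ a.1 = f.1 a := fun a =>
      congrFun (congrArg Subtype.val r₁) a
    have e₂ : ∀ a : Aev n, g₂ a.1 = f.1 a := fun a =>
      congrFun (congrArg Subtype.val r₂) a
    have eC : ∀ b : Cube n, b ∉ genSet (Aev n) f.1 → g₁ b = g₂ b := fun b hb =>
      congrFun hφ ⟨b, ⟨trivial, hb⟩⟩
    exact Subtype.ext (Subtype.ext (eq_of_agree m₁ m₂ f.1 e₁ e₂ eC))
  · intro h
    refine ⟨⟨⟨extFun f.1 h, extFun_mono f.1 h⟩,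
      Subtype.ext (funext fun a => extFun_extends f.2 h a)⟩, ?_⟩
    funext b
    exact extFun_compl f.1 h b.2


/-- `D_n` as a sum of powers of `2`, over monotone functions on the
even-weight points `A`: `D_n = Σ_{f ∈ M(A)} 2^|E^n \ S_{A,f}|`. -/
theorem dedekind_eq_sum_pow_two {n : ℕ} (hn : 3 ≤ n) :
    dedekind n =
      ∑ᶠ f : {f : {a : Cube n | Even (weight a)} → Bool // Monotone f},
        2 ^ ((Set.univ : Set (Cube n)) \
              genSet {a : Cube n | Even (weight a)} f.1).ncard := by
  classical
  have e1 : {f : ↥(Set.univ : Set (Cube n)) → Bool // Monotone f} ≃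
      {g : Cube n → Bool // Monotone g} :=
    { toFun := fun p => ⟨fun b => p.1 ⟨b, trivial⟩,
        fun a b hab => p.2 (Subtype.mk_le_mk.mpr hab)⟩
      invFun := fun q => ⟨fun b => q.1 b.1, fun a b hab => q.2 (Subtype.coe_le_coe.mpr hab)⟩
      left_inv := fun p => rfl
      right_inv := fun q => rfl }
  show localDedekind (Set.univ : Set (Cube n)) = _
  rw [localDedekind]
  letI : ∀ f : {f : Aev n → Bool // Monotone f},
      Fintype {g : {g : Cube n → Bool // Monotone g} // restrictM g = f} :=
    fun f => Fintype.ofFinite _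
  letI : Fintype {f : Aev n → Bool // Monotone f} := Fintype.ofFinite _
  calc Nat.card {f : ↥(Set.univ : Set (Cube n)) → Bool // Monotone f}
      = Nat.card {g : Cube n → Bool // Monotone g} := Nat.card_congr e1
    _ = Nat.card (Σ f : {f : Aev n → Bool // Monotone f},
          {g : {g : Cube n → Bool // Monotone g} // restrictM g = f}) :=
        Nat.card_congr (Equiv.sigmaFiberEquiv restrictM).symm
    _ = ∑ f : {f : Aev n → Bool // Monotone f},
          Nat.card {g : {g : Cube n → Bool // Monotone g} // restrictM g = f} := by
        rw [Nat.card_eq_fintype_card, Fintype.card_sigma]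
        exact Finset.sum_congr rfl fun f _ => (Nat.card_eq_fintype_card).symm
    _ = ∑ f : {f : Aev n → Bool // Monotone f},
          2 ^ ((Set.univ : Set (Cube n)) \ genSet (Aev n) f.1).ncard := by
        refine Finset.sum_congr rfl fun f _ => ?_
        rw [Nat.card_congr (fiberEquiv f), Nat.card_fun, Nat.card_coe_set_eq]
        norm_num
    _ = ∑ᶠ f : {f : Aev n → Bool // Monotone f},
          2 ^ ((Set.univ : Set (Cube n)) \ genSet (Aev n) f.1).ncard :=
        (finsum_eq_sum_of_fintype _).symm

end Even
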